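/- Subadditivity of edit distance under concatenation: for all lists A1, A2, B1, B2 over a type with decidable equality, d(A1 ++ A2, B1 ++ B2) ≤ d(A1, B1) + d(A2, B2). -/

import Mathlib

namespace Levenshtein

/-- A cost structure for Levenshtein edit distance (as in the older Mathlib). -/
structure Cost (α β δ : Type*) where
  /-- Cost to delete an element from a list. -/
  delete : α → δ
  /-- Cost in insert an element into a list. -/
  insert : β → δ
  /-- Cost to substitute one element for another in a list. -/
  substitute : α → β → δ

/-- The default cost structure, for which the distance is the unit-cost edit distance. -/
def defaultCost {α : Type*} [DecidableEq α] : Cost α α ℕ where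
  delete _ := 1
  insert _ := 1
  substitute a b := if a = b then 0 else 1

/-- Inner step of the Levenshtein dynamic programme (as in the older Mathlib). -/
def impl {α β δ : Type*} [AddZeroClass δ] [Min δ] (C : Cost α β δ)
    (xs : List α) (y : β) (d : {r : List δ // 0 < r.length}) :
    {r : List δ // 0 < r.length} :=
  let ⟨ds, w⟩ := d
  xs.zip (ds.zip ds.tail) |>.foldr
    (init := ⟨[C.insert y + ds.getLast (List.ne_nil_of_length_pos w)], by simp⟩)
    (fun ⟨x, d₀, d₁⟩ ⟨r, w⟩ =>
      ⟨min (C.delete x + r[0]) (min (C.insert y + d₀) (C.substitute x y + d₁)) :: r, by simp⟩)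

end Levenshtein

/-- Levenshtein distances of all pairs of suffixes (as in the older Mathlib). -/
def suffixLevenshtein {α β δ : Type*} [AddZeroClass δ] [Min δ] (C : Levenshtein.Cost α β δ)
    (xs : List α) (ys : List β) : {r : List δ // 0 < r.length} :=
  ys.foldr
    (Levenshtein.impl C xs)
    (xs.foldr (init := ⟨[0], by simp⟩) (fun a ⟨r, w⟩ => ⟨(C.delete a + r[0]) :: r, by simp⟩))

/-- The Levenshtein distance (as in the older Mathlib). -/
def levenshtein {α β δ : Type*} [AddZeroClass δ] [Min δ] (C : Levenshtein.Cost α β δ)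
    (xs : List α) (ys : List β) : δ :=
  let ⟨r, w⟩ := suffixLevenshtein C xs ys
  r[0]

/-- The unit-cost Levenshtein edit distance. -/
def editDist {α : Type*} [DecidableEq α] (A B : List α) : ℕ :=
  levenshtein Levenshtein.defaultCost A B

/-!
Concatenating an edit script for `A₁ ↦ B₁` with one for `A₂ ↦ B₂` gives an edit script for
`A₁ ++ A₂ ↦ B₁ ++ B₂`. On the dynamic-programming recurrence this is an induction on `A₁` and `B₁`:
when both are nonempty, each of the three branches of the recurrence for `d(A₁, B₁)` bounds the
same branch for the concatenations; when one of them is empty, it is deleted or inserted outright.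
-/

theorem Subtype.ext_of_getElem_zero_of_tail {ε : Type*}
    {s t : {r : List ε // 0 < r.length}}
    (h₀ : s.1[0]'s.2 = t.1[0]'t.2) (h : s.1.tail = t.1.tail) : s = t :=
  match s, t with
  | ⟨_ :: _, _⟩, ⟨_ :: _, _⟩ => by simp_all

namespace Levenshtein

variable {α β δ : Type*}

section Recurrence

variable [AddZeroClass δ] [Min δ] (C : Cost α β δ)

theorem impl_cons {x : α} {xs : List α} {y : β} {d : δ} {ds : List δ}
    (w' : 0 < ds.length) :
    impl C (x :: xs) y ⟨d :: ds, by simp⟩ =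
      let ⟨r, w⟩ := impl C xs y ⟨ds, w'⟩
      ⟨min (C.delete x + r[0]) (min (C.insert y + d) (C.substitute x y + ds[0])) :: r, by simp⟩ :=
  match ds, w' with | _ :: _, _ => rfl

theorem impl_length {xs : List α} {y : β} (d : {r : List δ // 0 < r.length})
    (w : d.1.length = xs.length + 1) :
    (impl C xs y d).1.length = xs.length + 1 := by
  induction xs generalizing d with
  | nil => rfl
  | cons x xs ih =>
    match d, w with
    | ⟨d₁ :: d₂ :: ds, _⟩, w =>
      rw [impl_cons C (by simp)]
      simpa using ih ⟨d₂ :: ds, by simp⟩ (by simpa using w)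

theorem suffixLevenshtein_length (xs : List α) (ys : List β) :
    (suffixLevenshtein C xs ys).1.length = xs.length + 1 := by
  induction ys with
  | nil =>
    induction xs with
    | nil => rfl
    | cons _ xs ih => simpa [suffixLevenshtein] using ih
  | cons y ys ih => exact impl_length C _ ih

theorem suffixLevenshtein_cons_left (x : α) (xs : List α) (ys : List β) :
    suffixLevenshtein C (x :: xs) ys =
      ⟨levenshtein C (x :: xs) ys :: (suffixLevenshtein C xs ys).1, by simp⟩ := by
  induction ys with
  | nil => rfl
  | cons y ys ih =>
    apply Subtype.ext_of_getElem_zero_of_tail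
    · rfl
    · show (impl C (x :: xs) y (suffixLevenshtein C (x :: xs) ys)).1.tail = _
      rw [ih, impl_cons C (by simp [suffixLevenshtein_length])]
      rfl

@[simp] theorem levenshtein_nil_nil : levenshtein C [] [] = 0 := rfl

@[simp] theorem levenshtein_cons_nil (x : α) (xs : List α) :
    levenshtein C (x :: xs) [] = C.delete x + levenshtein C xs [] := rfl

@[simp] theorem levenshtein_nil_cons (y : β) (ys : List β) :
    levenshtein C [] (y :: ys) = C.insert y + levenshtein C [] ys := by
  have impl_nil : ∀ d : {r : List δ // 0 < r.length}, d.1.length = 1 →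
      (impl C [] y d).1[0]'(impl C [] y d).2 = C.insert y + d.1[0]'d.2
    | ⟨[_], _⟩, _ => rfl
  exact impl_nil _ (suffixLevenshtein_length C [] ys)

theorem levenshtein_cons_cons (x : α) (xs : List α) (y : β) (ys : List β) :
    levenshtein C (x :: xs) (y :: ys) =
      min (C.delete x + levenshtein C xs (y :: ys))
        (min (C.insert y + levenshtein C (x :: xs) ys)
          (C.substitute x y + levenshtein C xs ys)) := by
  have hcons : suffixLevenshtein C (x :: xs) (y :: ys) =
      impl C (x :: xs) y
        ⟨levenshtein C (x :: xs) ys :: (suffixLevenshtein C xs ys).1, by simp⟩ := by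
    rw [← suffixLevenshtein_cons_left]
    rfl
  refine (congrArg (fun s => s.1[0]'s.2) hcons).trans ?_
  rw [impl_cons C (by simp [suffixLevenshtein_length])]
  rfl

end Recurrence

section Subadditivity

variable [AddCommMonoid δ] [LinearOrder δ] (C : Cost α β δ)

theorem levenshtein_cons_left_le (x : α) (xs : List α) (ys : List β) :
    levenshtein C (x :: xs) ys ≤ C.delete x + levenshtein C xs ys := by
  cases ys with
  | nil => exact (levenshtein_cons_nil C x xs).le
  | cons y ys => exact (levenshtein_cons_cons C x xs y ys).trans_le (min_le_left _ _)

theorem levenshtein_cons_right_le (xs : List α) (y : β) (ys : List β) :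
    levenshtein C xs (y :: ys) ≤ C.insert y + levenshtein C xs ys := by
  cases xs with
  | nil => exact (levenshtein_nil_cons C y ys).le
  | cons x xs =>
    exact (levenshtein_cons_cons C x xs y ys).trans_le
      ((min_le_right _ _).trans (min_le_left _ _))

variable [IsOrderedAddMonoid δ]

theorem levenshtein_append_left_le (L xs : List α) (ys : List β) :
    levenshtein C (L ++ xs) ys ≤ levenshtein C L [] + levenshtein C xs ys := by
  induction L with
  | nil => simp
  | cons x L ih =>
    calc levenshtein C (x :: (L ++ xs)) ys
        ≤ C.delete x + levenshtein C (L ++ xs) ys := levenshtein_cons_left_le C _ _ _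
      _ ≤ C.delete x + (levenshtein C L [] + levenshtein C xs ys) := add_le_add_right ih _
      _ = levenshtein C (x :: L) [] + levenshtein C xs ys := by
        rw [levenshtein_cons_nil, add_assoc]

theorem levenshtein_append_right_le (xs : List α) (L ys : List β) :
    levenshtein C xs (L ++ ys) ≤ levenshtein C [] L + levenshtein C xs ys := by
  induction L with
  | nil => simp
  | cons y L ih =>
    calc levenshtein C xs (y :: (L ++ ys))
        ≤ C.insert y + levenshtein C xs (L ++ ys) := levenshtein_cons_right_le C _ _ _
      _ ≤ C.insert y + (levenshtein C [] L + levenshtein C xs ys) := add_le_add_right ih _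
      _ = levenshtein C [] (y :: L) + levenshtein C xs ys := by
        rw [levenshtein_nil_cons, add_assoc]

theorem levenshtein_append_le (A₁ A₂ : List α) (B₁ B₂ : List β) :
    levenshtein C (A₁ ++ A₂) (B₁ ++ B₂) ≤ levenshtein C A₁ B₁ + levenshtein C A₂ B₂ := by
  induction A₁ generalizing B₁ with
  | nil => exact levenshtein_append_right_le C A₂ B₁ B₂
  | cons a as ihA =>
    induction B₁ with
    | nil => exact levenshtein_append_left_le C (a :: as) A₂ B₂
    | cons b bs ihB =>
      simp only [List.cons_append, levenshtein_cons_cons, min_add, add_assoc]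
      simp only [List.cons_append] at ihB
      exact min_le_min (add_le_add_right (ihA (b :: bs)) _)
        (min_le_min (add_le_add_right ihB _) (add_le_add_right (ihA bs) _))

end Subadditivity

end Levenshtein

/-- Subadditivity of edit distance under concatenation. -/
theorem editDist_append_le {α : Type*} [DecidableEq α] (A₁ A₂ B₁ B₂ : List α) :
    editDist (A₁ ++ A₂) (B₁ ++ B₂) ≤ editDist A₁ B₁ + editDist A₂ B₂ :=
  Levenshtein.levenshtein_append_le _ A₁ A₂ B₁ B₂
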